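/- Let n = 2m be an even positive integer (m ≥ 1). Then, in the polynomial ring ℝ[t], ∏_{d | n} ψ_d(2t) = 2·(T_{m+1}(t) − T_{m−1}(t)), where the product is over the positive divisors d of n, ψ_d(2t) denotes the composition of ψ_d with the polynomial 2t, and T_k denotes the k-th Chebyshev polynomial of the first kind. -/

import Mathlib

/-!
Let `ζ = exp (2πi/d)`. The numbers `2 cos (2πj/d)` with `0 ≤ j ≤ d/2` and `j` coprime to `d` are
distinct Galois conjugates of `ζ + ζ⁻¹ = 2 cos (2π/d)` (send `ζ` to `ζ ^ j`), so they are roots of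
`ψ_d`; and there are at least `deg ψ_d` of them, because for `d > 2` the real field `ℚ(ζ + ζ⁻¹)`
is a proper subfield of `ℚ(ζ)`, whence `2 deg ψ_d ≤ φ(d)`. Hence `ψ_d` is the product of the
`t - 2 cos (2πj/d)`. Writing each `k/n` with `0 ≤ k ≤ m` in lowest terms `j/d`, the product over
`d ∣ n` becomes `∏_{k ≤ m} 2 (t - cos (πk/m))`. The `cos (πk/m)` are also the `m + 1` roots of
`T_{m+1} - T_{m-1}`, because `cos ((m+1)θ) - cos ((m-1)θ) = -2 sin (mθ) sin θ`, and both sides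
have leading coefficient `2 ^ (m + 1)`.
-/

open scoped Real
open Polynomial

noncomputable section

/-- `ψ_d`: the minimal polynomial over ℚ of `2 cos(2π/d)`, regarded as a polynomial in `ℝ[t]`. -/
def psiR (d : ℕ) : ℝ[X] :=
  (minpoly ℚ (2 * Real.cos (2 * π / d))).map (algebraMap ℚ ℝ)

open Finset Real IntermediateField

theorem Polynomial.eq_C_leadingCoeff_mul_prod_X_sub_C_of_injOn {R ι : Type*} [CommRing R]
    [IsDomain R] {p : R[X]} {s : Finset ι} {r : ι → R} (hp : p ≠ 0) (hinj : Set.InjOn r s)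
    (hroot : ∀ i ∈ s, p.IsRoot (r i)) (hdeg : p.natDegree ≤ #s) :
    p = C p.leadingCoeff * ∏ i ∈ s, (X - C (r i)) := by
  classical
  have hroots : p.roots = (s.image r).val :=
    roots_eq_of_natDegree_le_card_of_ne_zero (by simpa using fun i hi => (hroot i hi).eq_zero)
      (by rwa [card_image_of_injOn hinj]) hp
  have hcard : Multiset.card p.roots = p.natDegree :=
    (card_roots' p).antisymm (by rwa [hroots, card_val, card_image_of_injOn hinj])
  conv_lhs => rw [← C_leadingCoeff_mul_prod_multiset_X_sub_C hcard]
  rw [hroots, prod_map_val, prod_image hinj]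

theorem IsConjRoot.aeval {K L : Type*} [Field K] [Field L] [Algebra K L] {x y : L}
    (h : IsConjRoot K x y) (hx : IsIntegral K x) (p : K[X]) :
    IsConjRoot K (aeval x p) (aeval y p) := by
  have hgen (z : L) :
      Polynomial.aeval z p = algebraMap K⟮z⟯ L (Polynomial.aeval (AdjoinSimple.gen K z) p) := by
    rw [← aeval_algebraMap_apply, AdjoinSimple.algebraMap_gen]
  rw [isConjRoot_def, hgen x, hgen y, minpoly.algebraMap_eq (algebraMap K⟮x⟯ L).injective,
    minpoly.algebraMap_eq (algebraMap K⟮y⟯ L).injective,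
    ← minpoly.algEquiv_eq (minpoly.algEquiv hx.isAlgebraic (isConjRoot_def.mp h)),
    ← aeval_algHom_apply, minpoly.algEquiv_apply]

theorem IsPrimitiveRoot.isConjRoot_pow {L : Type*} [Field L] [CharZero L] {ζ : L} {d : ℕ}
    (hζ : IsPrimitiveRoot ζ d) (hd : 0 < d) {j : ℕ} (hj : j.Coprime d) :
    IsConjRoot ℚ ζ (ζ ^ j) := by
  rw [isConjRoot_def, ← cyclotomic_eq_minpoly_rat hζ hd,
    ← cyclotomic_eq_minpoly_rat (hζ.pow_of_coprime j hj) hd]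

theorem IsPrimitiveRoot.isConjRoot_add_inv_pow {L : Type*} [Field L] [CharZero L] {ζ : L}
    {d : ℕ} (hζ : IsPrimitiveRoot ζ d) (hd : 0 < d) {j : ℕ} (hj : j.Coprime d) :
    IsConjRoot ℚ (ζ + ζ⁻¹) (ζ ^ j + (ζ ^ j)⁻¹) := by
  have hinv (z : L) (hz : z ^ d = 1) : z + z⁻¹ = aeval z (X + X ^ (d - 1) : ℚ[X]) := by
    rw [map_add, aeval_X, map_pow, aeval_X,
      inv_eq_of_mul_eq_one_left (by rw [pow_sub_one_mul hd.ne', hz])]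
  have hζj : (ζ ^ j) ^ d = 1 := by rw [← pow_mul, mul_comm, pow_mul, hζ.pow_eq_one, one_pow]
  rw [hinv ζ hζ.pow_eq_one, hinv (ζ ^ j) hζj]
  exact (hζ.isConjRoot_pow hd hj).aeval ((hζ.isIntegral hd).tower_top) _

theorem IntermediateField.two_mul_finrank_le_of_lt {K L : Type*} [Field K] [Field L]
    [Algebra K L] {A B : IntermediateField K L} (h : A < B) [FiniteDimensional K B] :
    2 * Module.finrank K A ≤ Module.finrank K B := by
  have hne_one : A.relfinrank B ≠ 1 := fun h1 => h.not_ge (relfinrank_eq_one_iff.mp h1)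
  have hne_zero : A.relfinrank B ≠ 0 := fun h0 =>
    Module.finrank_pos.ne' (Nat.eq_zero_of_zero_dvd (h0 ▸ relfinrank_dvd_finrank_bot A B))
  rw [← finrank_bot_mul_relfinrank h.le, mul_comm]
  exact Nat.mul_le_mul_left _ (by omega)

theorem IsPrimitiveRoot.two_mul_natDegree_minpoly_add_inv_le {ζ : ℂ} {d : ℕ}
    (hζ : IsPrimitiveRoot ζ d) (hd : 2 < d) :
    2 * (minpoly ℚ (ζ + ζ⁻¹)).natDegree ≤ d.totient := by
  have hd0 : 0 < d := by omega
  have hint : IsIntegral ℚ ζ := (hζ.isIntegral hd0).tower_top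
  let reals : IntermediateField ℚ ℂ := (Complex.ofRealAm.restrictScalars ℚ).fieldRange
  have hreal : ζ + ζ⁻¹ ∈ reals := by
    rw [Complex.inv_eq_conj (hζ.norm'_eq_one hd0.ne'), Complex.add_conj]
    exact ⟨_, rfl⟩
  have hnonreal : ζ ∉ reals := by
    rintro ⟨r, hr : (r : ℂ) = ζ⟩
    have hnorm := hζ.norm'_eq_one hd0.ne'
    have : ζ ^ 2 = 1 := by
      rw [← hr, Complex.norm_real, Real.norm_eq_abs] at hnorm
      rw [← hr, ← Complex.ofReal_pow, ← sq_abs, hnorm, one_pow, Complex.ofReal_one]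
    have := Nat.le_of_dvd two_pos (hζ.dvd_of_pow_eq_one 2 this)
    omega
  have hlt : ℚ⟮ζ + ζ⁻¹⟯ < ℚ⟮ζ⟯ := by
    refine lt_of_le_of_ne (adjoin_simple_le_iff.mpr ?_) fun heq => hnonreal ?_
    · exact add_mem (mem_adjoin_simple_self ℚ ζ) (inv_mem (mem_adjoin_simple_self ℚ ζ))
    · exact adjoin_simple_le_iff.mp (heq ▸ adjoin_simple_le_iff.mpr hreal)
  have := adjoin.finiteDimensional hint
  have h := two_mul_finrank_le_of_lt hlt
  rwa [adjoin.finrank hint, ← cyclotomic_eq_minpoly_rat hζ hd0, natDegree_cyclotomic,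
    adjoin.finrank (hint.add (hζ.inv.isIntegral hd0).tower_top)] at h

theorem minpoly_rat_ofReal (x : ℝ) : minpoly ℚ (x : ℂ) = minpoly ℚ x :=
  minpoly.algebraMap_eq (algebraMap ℝ ℂ).injective x

theorem ofReal_two_mul_cos_two_pi_mul_div (d j : ℕ) :
    ((2 * cos (2 * π * j / d) : ℝ) : ℂ) =
      Complex.exp (2 * π * Complex.I / d) ^ j + (Complex.exp (2 * π * Complex.I / d) ^ j)⁻¹ := by
  rw [← Complex.exp_nat_mul, ← Complex.exp_neg]
  push_cast
  rw [Complex.two_cos]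
  ring_nf

theorem ofReal_two_mul_cos_two_pi_div (d : ℕ) :
    ((2 * cos (2 * π / d) : ℝ) : ℂ) =
      Complex.exp (2 * π * Complex.I / d) + (Complex.exp (2 * π * Complex.I / d))⁻¹ := by
  simpa using ofReal_two_mul_cos_two_pi_mul_div d 1

theorem isConjRoot_two_mul_cos_two_pi_div {d j : ℕ} (hd : 0 < d) (hj : j.Coprime d) :
    IsConjRoot ℚ (2 * cos (2 * π / d)) (2 * cos (2 * π * j / d)) := by
  have h := (Complex.isPrimitiveRoot_exp d hd.ne').isConjRoot_add_inv_pow hd hj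
  rwa [← ofReal_two_mul_cos_two_pi_div, ← ofReal_two_mul_cos_two_pi_mul_div, isConjRoot_def,
    minpoly_rat_ofReal, minpoly_rat_ofReal] at h

theorem two_mul_natDegree_minpoly_two_mul_cos_le {d : ℕ} (hd : 2 < d) :
    2 * (minpoly ℚ (2 * cos (2 * π / d))).natDegree ≤ d.totient := by
  have h := (Complex.isPrimitiveRoot_exp d (by omega)).two_mul_natDegree_minpoly_add_inv_le hd
  rwa [← ofReal_two_mul_cos_two_pi_div, minpoly_rat_ofReal] at h

def coprimesUpToHalf (d : ℕ) : Finset ℕ := {j ∈ range (d / 2 + 1) | j.Coprime d}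

theorem mem_coprimesUpToHalf {d j : ℕ} : j ∈ coprimesUpToHalf d ↔ 2 * j ≤ d ∧ j.Coprime d := by
  rw [coprimesUpToHalf, mem_filter, mem_range]
  omega

theorem totient_le_two_mul_card_coprimesUpToHalf (d : ℕ) :
    d.totient ≤ 2 * #(coprimesUpToHalf d) := by
  have hsub : {a ∈ range d | d.Coprime a} ⊆
      coprimesUpToHalf d ∪ (coprimesUpToHalf d).image (d - ·) := by
    intro a ha
    rw [mem_filter, mem_range, Nat.coprime_comm] at ha
    rw [mem_union, mem_image, mem_coprimesUpToHalf]
    by_cases h : 2 * a ≤ d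
    · exact .inl ⟨h, ha.2⟩
    · refine .inr ⟨d - a, mem_coprimesUpToHalf.mpr ⟨by omega, ?_⟩, by omega⟩
      exact (Nat.coprime_self_sub_left ha.1.le).mpr ha.2
  calc d.totient ≤ #(coprimesUpToHalf d ∪ (coprimesUpToHalf d).image (d - ·)) :=
        card_le_card hsub
    _ ≤ #(coprimesUpToHalf d) + #(coprimesUpToHalf d) :=
        (card_union_le _ _).trans (Nat.add_le_add_left card_image_le _)
    _ = 2 * #(coprimesUpToHalf d) := (two_mul _).symm

theorem prod_divisors_prod_coprimesUpToHalf {M : Type*} [CommMonoid M] {n : ℕ} (hn : n ≠ 0)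
    (f : ℚ → M) :
    ∏ d ∈ n.divisors, ∏ j ∈ coprimesUpToHalf d, f (j / d) =
      ∏ k ∈ range (n / 2 + 1), f (k / n) := by
  have hmem {x : (_ : ℕ) × ℕ} (hx : x ∈ n.divisors.sigma coprimesUpToHalf) :
      x.1 ∣ n ∧ 2 * x.2 ≤ x.1 ∧ x.2.Coprime x.1 := by
    rw [mem_sigma, Nat.mem_divisors, mem_coprimesUpToHalf] at hx
    exact ⟨hx.1.1, hx.2⟩
  have hrange {k : ℕ} : k ∈ range (n / 2 + 1) ↔ 2 * k ≤ n := by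
    rw [mem_range]
    omega
  rw [prod_sigma']
  refine prod_bij' (fun x _ => x.2 * (n / x.1)) (fun k _ => ⟨n / k.gcd n, k / k.gcd n⟩)
    ?_ ?_ ?_ ?_ ?_
  · rintro ⟨d, j⟩ hx
    obtain ⟨hdvd, hj, -⟩ := hmem hx
    rw [hrange, ← mul_assoc]
    exact (Nat.mul_le_mul_right _ hj).trans (Nat.mul_div_cancel' hdvd).le
  · intro k hk
    have hg : 0 < k.gcd n := Nat.gcd_pos_of_pos_right k (Nat.pos_of_ne_zero hn)
    rw [mem_sigma, Nat.mem_divisors, mem_coprimesUpToHalf]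
    refine ⟨⟨Nat.div_dvd_of_dvd (Nat.gcd_dvd_right k n), hn⟩, ?_,
      Nat.coprime_div_gcd_div_gcd hg⟩
    exact (Nat.mul_div_le_mul_div_assoc 2 k _).trans (Nat.div_le_div_right (hrange.mp hk))
  · rintro ⟨d, j⟩ hx
    obtain ⟨⟨e, rfl⟩, -, hcop⟩ := hmem hx
    have hd : 0 < d := Nat.pos_of_ne_zero (left_ne_zero_of_mul hn)
    have he : 0 < e := Nat.pos_of_ne_zero (right_ne_zero_of_mul hn)
    have hgcd : (j * e).gcd (d * e) = e := by rw [Nat.gcd_mul_right, hcop, one_mul]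
    simp only [Nat.mul_div_cancel_left e hd, hgcd, Nat.mul_div_cancel _ he]
  · intro k _
    simp only [Nat.div_div_self (Nat.gcd_dvd_right k n) hn,
      Nat.div_mul_cancel (Nat.gcd_dvd_left k n)]
  · rintro ⟨d, j⟩ hx
    obtain ⟨⟨e, rfl⟩, -, -⟩ := hmem hx
    have he : (e : ℚ) ≠ 0 := Nat.cast_ne_zero.mpr (right_ne_zero_of_mul hn)
    rw [Nat.mul_div_cancel_left e (Nat.pos_of_ne_zero (left_ne_zero_of_mul hn))]
    push_cast
    rw [mul_div_mul_right _ _ he]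

theorem injOn_two_mul_cos_two_pi_mul_div (d : ℕ) :
    Set.InjOn (fun j : ℕ => 2 * cos (2 * π * j / d)) {j | 2 * j ≤ d} := by
  intro a ha b hb hab
  rcases Nat.eq_zero_or_pos d with rfl | hd
  · simp_all
  have hmem {j : ℕ} (hj : 2 * j ≤ d) : 2 * π * j / d ∈ Set.Icc 0 π := by
    refine ⟨by positivity, (div_le_iff₀ (by positivity)).mpr ?_⟩
    have : (2 * j : ℝ) ≤ d := by exact_mod_cast hj
    nlinarith [pi_pos]
  have h := injOn_cos (hmem ha) (hmem hb) (by simpa using hab)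
  field_simp at h
  exact_mod_cast h

theorem isIntegral_two_mul_cos_two_pi_div {d : ℕ} (hd : 0 < d) :
    IsIntegral ℚ (2 * cos (2 * π / d)) := by
  have hζ := Complex.isPrimitiveRoot_exp d hd.ne'
  have h : IsIntegral ℚ ((2 * cos (2 * π / d) : ℝ) : ℂ) := by
    rw [ofReal_two_mul_cos_two_pi_div]
    exact ((hζ.isIntegral hd).add (hζ.inv.isIntegral hd)).tower_top
  exact (isIntegral_algebraMap_iff (algebraMap ℝ ℂ).injective).mp h

theorem psiR_monic {d : ℕ} (hd : 0 < d) : (psiR d).Monic :=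
  (minpoly.monic (isIntegral_two_mul_cos_two_pi_div hd)).map _

theorem natDegree_psiR_le {d : ℕ} (hd : 0 < d) : (psiR d).natDegree ≤ #(coprimesUpToHalf d) := by
  rw [psiR, natDegree_map]
  rcases lt_or_ge 2 d with h | h
  · have := two_mul_natDegree_minpoly_two_mul_cos_le h
    have := totient_le_two_mul_card_coprimesUpToHalf d
    omega
  · interval_cases d
    · have : 2 * cos (2 * π / (1 : ℕ)) = algebraMap ℚ ℝ 2 := by norm_num
      rw [this, minpoly.eq_X_sub_C, natDegree_X_sub_C]
      decide
    · have : 2 * cos (2 * π / (2 : ℕ)) = algebraMap ℚ ℝ (-2) := by norm_num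
      rw [this, minpoly.eq_X_sub_C, natDegree_X_sub_C]
      decide

theorem psiR_eq_prod {d : ℕ} (hd : 0 < d) :
    psiR d = ∏ j ∈ coprimesUpToHalf d, (X - C (2 * cos (2 * π * j / d))) := by
  have h := eq_C_leadingCoeff_mul_prod_X_sub_C_of_injOn (psiR_monic hd).ne_zero
    ((injOn_two_mul_cos_two_pi_mul_div d).mono fun j hj => (mem_coprimesUpToHalf.mp hj).1)
    (fun j hj => ?_) (natDegree_psiR_le hd)
  · rwa [(psiR_monic hd).leadingCoeff, C_1, one_mul] at h
  · rw [IsRoot, psiR, eval_map_algebraMap]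
    exact (isConjRoot_two_mul_cos_two_pi_div hd (mem_coprimesUpToHalf.mp hj).2).aeval_eq_zero

theorem psiR_comp_two_mul_X {d : ℕ} (hd : 0 < d) :
    (psiR d).comp (2 * X) = ∏ j ∈ coprimesUpToHalf d, C 2 * (X - C (cos (2 * π * j / d))) := by
  rw [psiR_eq_prod hd, Polynomial.prod_comp]
  refine prod_congr rfl fun j _ => ?_
  rw [sub_comp, X_comp, C_comp, C_mul, ← C_ofNat]
  ring

theorem Polynomial.Chebyshev.isRoot_T_add_one_sub_T_sub_one_node {m k : ℕ} (hm : m ≠ 0) :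
    (T ℝ (m + 1) - T ℝ (m - 1)).IsRoot (node m k) := by
  have hmθ : (m : ℝ) * (k * π / m) = k * π := by field_simp
  rw [IsRoot, eval_sub, node, T_real_cos, T_real_cos, sub_eq_zero]
  push_cast
  rw [add_mul, sub_mul, one_mul, hmθ, cos_add, cos_sub, sin_nat_mul_pi]
  ring

theorem Polynomial.Chebyshev.two_mul_T_add_one_sub_T_sub_one_eq_prod_node {m : ℕ} (hm : m ≠ 0) :
    2 * (T ℝ (m + 1) - T ℝ (m - 1)) =
      ∏ k ∈ range (m + 1), Polynomial.C 2 * (X - Polynomial.C (node m k)) := by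
  have hlt : (T ℝ (m - 1)).natDegree < (T ℝ (m + 1)).natDegree := by
    simp only [natDegree_T]
    omega
  have hdeg : (T ℝ (m + 1) - T ℝ (m - 1)).natDegree = m + 1 := by
    rw [natDegree_sub_eq_left_of_natDegree_lt hlt, natDegree_T]
    omega
  have hlead : (T ℝ (m + 1) - T ℝ (m - 1)).leadingCoeff = 2 ^ m := by
    rw [leadingCoeff_sub_of_degree_lt (degree_lt_degree hlt), leadingCoeff_T]
    congr
  have hne : T ℝ (m + 1) - T ℝ (m - 1) ≠ 0 := fun h => by simp [h] at hdeg
  have h := eq_C_leadingCoeff_mul_prod_X_sub_C_of_injOn hne (strictAntiOn_node m).injOn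
    (fun k _ => isRoot_T_add_one_sub_T_sub_one_node hm) (by rw [hdeg, card_range])
  rw [h, hlead, prod_mul_distrib, prod_const, card_range, pow_succ', ← Polynomial.C_pow,
    ← Polynomial.C_ofNat, mul_assoc]

/-- Watkins–Zeitlin, even case: for `n = 2m`,
`∏_{d ∣ n} ψ_d(2t) = 2 (T_{m+1}(t) − T_{m−1}(t))`. -/
theorem prod_psi_two_X_even (m n : ℕ) (hm : 1 ≤ m) (hn : n = 2 * m) :
    ∏ d ∈ n.divisors, (psiR d).comp (2 * X) =
      2 * (Polynomial.Chebyshev.T ℝ (m + 1) - Polynomial.Chebyshev.T ℝ (m - 1)) := by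
  subst hn
  let g : ℚ → ℝ[X] := fun q => C 2 * (X - C (cos (2 * π * q)))
  calc ∏ d ∈ (2 * m).divisors, (psiR d).comp (2 * X)
      = ∏ d ∈ (2 * m).divisors, ∏ j ∈ coprimesUpToHalf d, g (j / d) := by
        refine prod_congr rfl fun d hd => ?_
        simp only [psiR_comp_two_mul_X (Nat.pos_of_mem_divisors hd), g, Rat.cast_div,
          Rat.cast_natCast, mul_div_assoc]
    _ = ∏ k ∈ range (m + 1), g (k / (2 * m : ℕ)) := by
        rw [prod_divisors_prod_coprimesUpToHalf (by omega), Nat.mul_div_cancel_left m two_pos]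
    _ = ∏ k ∈ range (m + 1), C 2 * (X - C (Chebyshev.node m k)) := by
        refine prod_congr rfl fun k _ => ?_
        simp only [g, Chebyshev.node]
        congr 4
        push_cast
        field_simp
    _ = _ := (Chebyshev.two_mul_T_add_one_sub_T_sub_one_eq_prod_node (by omega)).symm

end
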